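/- For fixed T with 0 < T < 1, the function I_1(α, T) defined by I_1(α,T) = ((2α-1)/(2 sqrt(2))) ∫_1^∞ ((1-T)^{(v-1/2)(2α-1)/2} - (1-T)^{(-v-1/2)(2α-1)/2}) / ((1 - 1/v)(1-T)^{v(2α-1)/2} + (1 + 1/v)(1-T)^{-v(2α-1)/2})^{3/2} dv satisfies I_1(α, T) → 1/(2 ln(1-T)) as α → ∞. -/

import Mathlib

/-!
Write `L = log (1 - T) < 0` and `c = 2α - 1`, so that `(1 - T) ^ x = exp (x * L)`. The
substitution `v = 1 + 2u/c`, after dividing numerator and denominator by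
`exp (-v c L / 2) ^ (3/2)`, turns the integral into `2/c` times an integral over `u > 0` whose
integrand is dominated by `exp (L u / 2)` and tends to `-exp (L u / 2) / 2^(3/2)` as `c → ∞`
(the terms carrying a factor `exp (c L)` vanish and `1/v → 1`). Dominated convergence and
`∫₀^∞ exp (L u / 2) du = -2/L` give the limit `c/(2√2) · 2/c · (-1/(2√2)) · (-2/L) = 1/(2L)`.
-/

open Real MeasureTheory Filter Set Topology

theorem integral_Ioi_eq_smul_integral_Ioi_zero {E : Type*} [NormedAddCommGroup E]
    [NormedSpace ℝ E] (f : ℝ → E) (a : ℝ) {k : ℝ} (hk : 0 < k) :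
    ∫ x in Ioi a, f x = k • ∫ u in Ioi 0, f (a + k * u) := by
  have shift := (measurePreserving_add_left volume a).setIntegral_preimage_emb
    (measurableEmbedding_addLeft a) f (Ioi a)
  rw [preimage_const_add_Ioi, sub_self] at shift
  rw [integral_comp_mul_left_Ioi' (fun x => f (a + x)) 0 hk, mul_zero, shift]

-- `integrand (log (1 - T)) (2 * α - 1) v` is the integrand of `I₁(α, T)`.
noncomputable def integrand (L c v : ℝ) : ℝ :=
  (exp ((v - 1/2) * c / 2 * L) - exp ((-v - 1/2) * c / 2 * L)) /
    ((1 - 1/v) * exp (v * c / 2 * L) + (1 + 1/v) * exp (-v * c / 2 * L)) ^ ((3:ℝ)/2)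

noncomputable def scaledIntegrand (L c u : ℝ) : ℝ :=
  (exp (L * c + 5 * L / 2 * u) - exp (L / 2 * u)) /
    ((1 - (1 + 2 / c * u)⁻¹) * exp (L * c + 2 * L * u) + (1 + (1 + 2 / c * u)⁻¹)) ^ ((3:ℝ)/2)

theorem one_le_sub_mul_add {w E : ℝ} (hw0 : 0 ≤ w) (hw1 : w ≤ 1) (hE : 0 ≤ E) :
    1 ≤ (1 - w) * E + (1 + w) := by
  nlinarith [mul_nonneg (sub_nonneg.2 hw1) hE]

theorem inv_one_add_mem_Icc {x : ℝ} (hx : 0 ≤ x) : (1 + x)⁻¹ ∈ Icc 0 1 :=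
  ⟨by positivity, inv_le_one_of_one_le₀ (le_add_of_nonneg_right hx)⟩

theorem integrand_one_add_mul {L c u : ℝ} (hc : 0 < c) (hu : 0 ≤ u) :
    integrand L c (1 + 2 / c * u) = scaledIntegrand L c u := by
  set v := 1 + 2 / c * u
  obtain ⟨hw0, hw1⟩ := inv_one_add_mem_Icc (by positivity : 0 ≤ 2 / c * u)
  have hvc : v * c = c + 2 * u := by simp only [v]; field_simp
  have hB := one_le_sub_mul_add hw0 hw1 (exp_pos (L * c + 2 * L * u)).le
  have factor : (1 - 1/v) * exp (v * c / 2 * L) + (1 + 1/v) * exp (-v * c / 2 * L)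
      = exp (-v * c / 2 * L) * ((1 - v⁻¹) * exp (L * c + 2 * L * u) + (1 + v⁻¹)) := by
    have e : exp (-v * c / 2 * L) * exp (L * c + 2 * L * u) = exp (v * c / 2 * L) := by
      rw [← exp_add]; congr 1; linear_combination (-L) * hvc
    rw [one_div]; linear_combination (-(1 - v⁻¹)) * e
  rw [integrand, scaledIntegrand, factor, mul_rpow (exp_pos _).le (by linarith), ← exp_mul,
    ← div_div, sub_div, ← exp_sub, ← exp_sub]
  congr 3
  · linear_combination (5 * L / 4) * hvc
  · linear_combination (L / 4) * hvc

theorem abs_scaledIntegrand_le {L c u : ℝ} (hL : L ≤ 0) (hc : 0 ≤ c) (hu : 0 ≤ u) :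
    |scaledIntegrand L c u| ≤ exp (L / 2 * u) := by
  obtain ⟨hw0, hw1⟩ := inv_one_add_mem_Icc (by positivity : 0 ≤ 2 / c * u)
  have hB := one_le_sub_mul_add hw0 hw1 (exp_pos (L * c + 2 * L * u)).le
  have hD : 1 ≤ ((1 - (1 + 2 / c * u)⁻¹) * exp (L * c + 2 * L * u)
      + (1 + (1 + 2 / c * u)⁻¹)) ^ ((3:ℝ)/2) := one_le_rpow hB (by norm_num)
  have hnum : exp (L * c + 5 * L / 2 * u) ≤ exp (L / 2 * u) :=
    exp_le_exp.2 (by nlinarith [mul_nonpos_of_nonpos_of_nonneg hL hc,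
      mul_nonpos_of_nonpos_of_nonneg hL hu])
  rw [scaledIntegrand, abs_div, abs_of_nonneg (zero_le_one.trans hD),
    abs_of_nonpos (sub_nonpos.2 hnum)]
  calc _ ≤ -(exp (L * c + 5 * L / 2 * u) - exp (L / 2 * u)) := div_le_self (by linarith) hD
    _ ≤ exp (L / 2 * u) := by linarith [exp_pos (L * c + 5 * L / 2 * u)]

theorem tendsto_scaledIntegrand {L : ℝ} (hL : L < 0) (u : ℝ) :
    Tendsto (fun c => scaledIntegrand L c u) atTop (𝓝 (-exp (L / 2 * u) / (2 * √2))) := by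
  have hexp (b : ℝ) : Tendsto (fun c => exp (L * c + b)) atTop (𝓝 0) :=
    tendsto_exp_atBot.comp (tendsto_atBot_add_const_right _ _
      (tendsto_id.const_mul_atTop_of_neg hL))
  have hw : Tendsto (fun c : ℝ => (1 + 2 / c * u)⁻¹) atTop (𝓝 1) := by
    have h := ((tendsto_const_nhds (x := (2:ℝ))).div_atTop tendsto_id).mul_const u
      |>.const_add 1 |>.inv₀ (by norm_num)
    simpa using h
  have hbase : Tendsto (fun c => (1 - (1 + 2 / c * u)⁻¹) * exp (L * c + 2 * L * u)
      + (1 + (1 + 2 / c * u)⁻¹)) atTop (𝓝 2) := by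
    have h := (((tendsto_const_nhds (x := (1:ℝ))).sub hw).mul (hexp (2 * L * u))).add
      ((tendsto_const_nhds (x := (1:ℝ))).add hw)
    norm_num at h
    exact h
  have h32 : (2:ℝ) ^ ((3:ℝ)/2) = 2 * √2 := by
    rw [show (3:ℝ)/2 = 1 + 1/2 by norm_num, rpow_add two_pos, rpow_one, sqrt_eq_rpow]
  have hden := hbase.rpow_const (p := (3:ℝ)/2) (Or.inl two_ne_zero)
  rw [h32] at hden
  have h := ((hexp (5 * L / 2 * u)).sub_const (exp (L / 2 * u))).div hden (by positivity)
  rwa [zero_sub] at h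

theorem tendsto_integral_scaledIntegrand {L : ℝ} (hL : L < 0) :
    Tendsto (fun c => ∫ u in Ioi 0, scaledIntegrand L c u) atTop (𝓝 (1 / (√2 * L))) := by
  have hL2 : L / 2 < 0 := by linarith
  have hlim : ∫ u in Ioi 0, -exp (L / 2 * u) / (2 * √2) = 1 / (√2 * L) := by
    rw [integral_div, integral_neg, integral_exp_mul_Ioi hL2 0, mul_zero, exp_zero]
    field_simp
  rw [← hlim]
  refine tendsto_integral_filter_of_dominated_convergence (fun u => exp (L / 2 * u)) ?_ ?_
    (integrableOn_exp_mul_Ioi hL2 0) ?_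
  · exact .of_forall fun c =>
      (by unfold scaledIntegrand; fun_prop : Measurable _).aestronglyMeasurable
  · filter_upwards [eventually_gt_atTop 0] with c hc
    filter_upwards [ae_restrict_mem measurableSet_Ioi] with u hu
    exact abs_scaledIntegrand_le hL.le hc.le (le_of_lt hu)
  · exact .of_forall fun u => tendsto_scaledIntegrand hL u

theorem tendsto_mul_integral_integrand {L : ℝ} (hL : L < 0) :
    Tendsto (fun c => c / (2 * √2) * ∫ v in Ioi 1, integrand L c v) atTop (𝓝 (1 / (2 * L))) := by
  have h := (tendsto_integral_scaledIntegrand hL).const_mul (√2)⁻¹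
  rw [show (√2)⁻¹ * (1 / (√2 * L)) = 1 / (2 * L) by
    rw [← one_div, one_div_mul_one_div, ← mul_assoc, mul_self_sqrt zero_le_two]] at h
  refine h.congr' ?_
  filter_upwards [eventually_gt_atTop 0] with c hc
  rw [integral_Ioi_eq_smul_integral_Ioi_zero _ 1 (div_pos two_pos hc), smul_eq_mul,
    setIntegral_congr_fun measurableSet_Ioi fun u hu => integrand_one_add_mul hc (le_of_lt hu)]
  field_simp

theorem stmt_12 (T : ℝ) (hT0 : 0 < T) (hT1 : T < 1) :
    Filter.Tendsto
      (fun α : ℝ => ((2*α - 1) / (2 * Real.sqrt 2)) *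
        ∫ v in Set.Ioi (1:ℝ),
          (Real.exp ((v - 1/2) * (2*α - 1) / 2 * Real.log (1 - T)) -
           Real.exp ((-v - 1/2) * (2*α - 1) / 2 * Real.log (1 - T))) /
            ((1 - 1/v) * Real.exp (v * (2*α - 1) / 2 * Real.log (1 - T)) +
             (1 + 1/v) * Real.exp (-v * (2*α - 1) / 2 * Real.log (1 - T))) ^ ((3:ℝ)/2))
      Filter.atTop (nhds (1 / (2 * Real.log (1 - T)))) := by
  have hL : log (1 - T) < 0 := log_neg (by linarith) (by linarith)
  have hc : Tendsto (fun α : ℝ => 2 * α - 1) atTop atTop :=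
    tendsto_atTop_add_const_right _ _ (tendsto_id.const_mul_atTop two_pos)
  exact (tendsto_mul_integral_integrand hL).comp hc
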